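/- arXiv:2001.08932 — 2 statements merged into one kernel-verified Lean document; each statement's English description precedes it below -/
import Mathlib

section
/- For any finite group G, the vertex covering number of the enhanced power graph of G equals |G| − μ(G), where μ(G) is the number of maximal cyclic subgroups of G. -/
/-- The enhanced power graph of a group `G`: distinct `x, y` are adjacent iff they lie in a
common cyclic subgroup of `G`. -/
def enhancedPowerGraph (G : Type*) [Group G] : SimpleGraph G where
  Adj x y := x ≠ y ∧ ∃ z : G, x ∈ Subgroup.zpowers z ∧ y ∈ Subgroup.zpowers z
  symm := by
    constructor
    rintro x y ⟨hxy, z, hx, hy⟩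
    exact ⟨hxy.symm, z, hy, hx⟩
  loopless := by
    constructor
    rintro x ⟨hx, -⟩
    exact hx rfl

/-- The minimum degree of a finite graph. -/
noncomputable def minDeg {V : Type*} [Fintype V] (g : SimpleGraph V) : ℕ :=
  sInf {k | ∃ v : V, (g.neighborSet v).ncard = k}

/-- A set of vertices is independent if no two of its members are adjacent. -/
def IsIndepSet' {V : Type*} (g : SimpleGraph V) (s : Set V) : Prop :=
  s.Pairwise fun x y => ¬ g.Adj x y

/-- The independence number. -/
noncomputable def indepNum {V : Type*} (g : SimpleGraph V) : ℕ :=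
  sSup {k | ∃ s : Set V, IsIndepSet' g s ∧ s.ncard = k}

/-- A matching: a set of edges of `g`, no two of which share a vertex. -/
def IsMatching' {V : Type*} (g : SimpleGraph V) (M : Set (Sym2 V)) : Prop :=
  M ⊆ g.edgeSet ∧ M.Pairwise fun e f => ∀ v : V, v ∈ e → v ∉ f

/-- The matching number. -/
noncomputable def matchingNum {V : Type*} (g : SimpleGraph V) : ℕ :=
  sSup {k | ∃ M : Set (Sym2 V), IsMatching' g M ∧ M.ncard = k}

/-- An edge cover: a set of edges such that every vertex is incident to some edge of it. -/
def IsEdgeCover {V : Type*} (g : SimpleGraph V) (E : Set (Sym2 V)) : Prop :=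
  E ⊆ g.edgeSet ∧ ∀ v : V, ∃ e ∈ E, v ∈ e

/-- The edge covering number. -/
noncomputable def edgeCoverNum {V : Type*} (g : SimpleGraph V) : ℕ :=
  sInf {k | ∃ E : Set (Sym2 V), IsEdgeCover g E ∧ E.ncard = k}

/-- A vertex cover: a set of vertices containing an endpoint of every edge. -/
def IsVertexCover {V : Type*} (g : SimpleGraph V) (s : Set V) : Prop :=
  ∀ ⦃x y : V⦄, g.Adj x y → x ∈ s ∨ y ∈ s

/-- The vertex covering number. -/
noncomputable def vertexCoverNum {V : Type*} (g : SimpleGraph V) : ℕ :=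
  sInf {k | ∃ s : Set V, IsVertexCover g s ∧ s.ncard = k}

/-- The edge connectivity: the least size of a set of edges whose deletion disconnects. -/
noncomputable def edgeConnectivity {V : Type*} (g : SimpleGraph V) : ℕ :=
  sInf {k | ∃ S : Set (Sym2 V), S ⊆ g.edgeSet ∧ ¬ (g.deleteEdges S).Connected ∧ S.ncard = k}

/-- The strong metric dimension. -/
noncomputable def sdim {V : Type*} (g : SimpleGraph V) : ℕ :=
  sInf {k | ∃ U : Set V,
    (∀ u v : V, u ≠ v → ∃ z ∈ U,
      g.dist z u = g.dist z v + g.dist v u ∨ g.dist z v = g.dist z u + g.dist u v) ∧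
    U.ncard = k}

/-- The clique number. -/
noncomputable def cliqueNum' {V : Type*} (g : SimpleGraph V) : ℕ :=
  sSup {k | ∃ s : Finset V, g.IsNClique k s}

/-- A graph is perfect if every induced subgraph has chromatic number equal to clique number. -/
def IsPerfect {V : Type*} (g : SimpleGraph V) : Prop :=
  ∀ s : Set V, (g.induce s).chromaticNumber = (cliqueNum' (g.induce s) : ℕ∞)

/-- `H` is a maximal cyclic subgroup of `G`. -/
def IsMaximalCyclic {G : Type*} [Group G] (H : Subgroup G) : Prop :=
  (∃ g : G, H = Subgroup.zpowers g) ∧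
    ∀ K : Subgroup G, (∃ g : G, K = Subgroup.zpowers g) → H ≤ K → H = K

/-!
The complement of a vertex cover is an independent set, so `β(Γ) = |V(Γ)| - α(Γ)` for any finite
graph, and it remains to see that the independence number of `P_e(G)` is `μ(G)`. Every element
lies in some maximal cyclic subgroup, and two elements of a common cyclic subgroup are adjacent,
so an independent set meets each maximal cyclic subgroup at most once. Conversely two maximal
cyclic subgroups inside a common cyclic subgroup coincide, so generators of distinct maximal
cyclic subgroups are never adjacent.
-/

section VertexCover

variable {V : Type*} {g : SimpleGraph V}

lemma isVertexCover_compl_iff {s : Set V} : IsVertexCover g sᶜ ↔ IsIndepSet' g s := by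
  refine ⟨fun h x hx y hy _ hxy => ?_, fun h x y hxy => ?_⟩
  · rcases h hxy with hx' | hy'
    exacts [hx' hx, hy' hy]
  · by_contra! hxy'
    obtain ⟨hx, hy⟩ := hxy'
    exact h (Set.notMem_compl_iff.mp hx) (Set.notMem_compl_iff.mp hy) hxy.ne hxy

lemma bddAbove_indepSet'_ncard [Finite V] (g : SimpleGraph V) :
    BddAbove {k | ∃ s : Set V, IsIndepSet' g s ∧ s.ncard = k} :=
  ⟨Nat.card V, by rintro _ ⟨s, -, rfl⟩; exact Set.ncard_le_card s⟩

lemma exists_isIndepSet'_ncard_eq_indepNum [Finite V] (g : SimpleGraph V) :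
    ∃ s : Set V, IsIndepSet' g s ∧ s.ncard = indepNum g :=
  Nat.sSup_mem (s := {k | ∃ s : Set V, IsIndepSet' g s ∧ s.ncard = k})
    ⟨0, ∅, Set.pairwise_empty _, Set.ncard_empty V⟩ (bddAbove_indepSet'_ncard g)

lemma IsIndepSet'.ncard_le_indepNum [Finite V] {s : Set V} (hs : IsIndepSet' g s) :
    s.ncard ≤ indepNum g :=
  le_csSup (bddAbove_indepSet'_ncard g) ⟨s, hs, rfl⟩

theorem vertexCoverNum_eq_card_sub_indepNum [Fintype V] (g : SimpleGraph V) :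
    vertexCoverNum g = Fintype.card V - indepNum g := by
  have ncard_compl (s : Set V) : sᶜ.ncard = Fintype.card V - s.ncard := by
    rw [← Nat.card_eq_fintype_card, ← Set.ncard_add_ncard_compl s]
    omega
  refine IsLeast.csInf_eq ⟨?_, ?_⟩
  · obtain ⟨s, hs, hcard⟩ := exists_isIndepSet'_ncard_eq_indepNum g
    exact ⟨sᶜ, isVertexCover_compl_iff.mpr hs, by rw [ncard_compl, hcard]⟩
  · rintro _ ⟨t, ht, rfl⟩
    have hindep : tᶜ.ncard ≤ indepNum g :=
      (isVertexCover_compl_iff.mp (by rwa [compl_compl])).ncard_le_indepNum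
    rw [ncard_compl] at hindep
    have := Set.ncard_le_card t
    rw [Nat.card_eq_fintype_card] at this
    omega

end VertexCover

section MaximalCyclic

variable {G : Type*} [Group G]

lemma exists_isMaximalCyclic_le [Finite G] (z : G) :
    ∃ H : Subgroup G, IsMaximalCyclic H ∧ Subgroup.zpowers z ≤ H := by
  obtain ⟨w, hzw, hmax⟩ := Set.Finite.exists_maximalFor
    (fun w : G => Nat.card (Subgroup.zpowers w))
    {w : G | Subgroup.zpowers z ≤ Subgroup.zpowers w}
    (Set.toFinite _) ⟨z, le_refl (Subgroup.zpowers z)⟩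
  refine ⟨Subgroup.zpowers w, ⟨⟨w, rfl⟩, ?_⟩, hzw⟩
  rintro _ ⟨u, rfl⟩ hwu
  have hcard := Subgroup.card_le_of_le hwu
  exact Subgroup.eq_of_le_of_card_ge hwu (hmax (hzw.trans hwu) hcard)

lemma IsMaximalCyclic.eq_zpowers_of_mem {H : Subgroup G} (hH : IsMaximalCyclic H) {x z : G}
    (hx : H = Subgroup.zpowers x) (hxz : x ∈ Subgroup.zpowers z) : H = Subgroup.zpowers z :=
  hH.2 _ ⟨z, rfl⟩ (hx ▸ Subgroup.zpowers_le.mpr hxz)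

lemma enhancedPowerGraph_adj_of_mem_zpowers {x y z : G} (hxy : x ≠ y)
    (hx : x ∈ Subgroup.zpowers z) (hy : y ∈ Subgroup.zpowers z) :
    (enhancedPowerGraph G).Adj x y :=
  ⟨hxy, z, hx, hy⟩

lemma exists_isIndepSet'_enhancedPowerGraph_ncard_eq [Finite G] :
    ∃ s : Set G, IsIndepSet' (enhancedPowerGraph G) s ∧
      s.ncard = {H : Subgroup G | IsMaximalCyclic H}.ncard := by
  choose! gen hgen using fun (H : Subgroup G) (hH : IsMaximalCyclic H) => hH.1
  have hinj : Set.InjOn gen {H | IsMaximalCyclic H} := fun H hH K hK hHK => by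
    rw [hgen H hH, hHK, ← hgen K hK]
  refine ⟨gen '' {H | IsMaximalCyclic H}, ?_, hinj.ncard_image⟩
  rintro _ ⟨H, hH, rfl⟩ _ ⟨K, hK, rfl⟩ hne ⟨-, z, hHz, hKz⟩
  refine hne (congrArg gen ?_)
  rw [hH.eq_zpowers_of_mem (hgen H hH) hHz, hK.eq_zpowers_of_mem (hgen K hK) hKz]

lemma IsIndepSet'.ncard_le_ncard_isMaximalCyclic [Finite G] {s : Set G}
    (hs : IsIndepSet' (enhancedPowerGraph G) s) :
    s.ncard ≤ {H : Subgroup G | IsMaximalCyclic H}.ncard := by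
  choose f hfmax hle using fun x : G => exists_isMaximalCyclic_le x
  have hmem (x : G) : x ∈ f x := hle x (Subgroup.mem_zpowers x)
  refine Set.ncard_le_ncard_of_injOn f (fun x _ => hfmax x) (fun x hx y hy hxy => ?_)
  by_contra hne
  obtain ⟨z, hz⟩ := (hfmax x).1
  exact hs hx hy hne <|
    enhancedPowerGraph_adj_of_mem_zpowers hne (hz ▸ hmem x) (hz ▸ hxy ▸ hmem y)

theorem indepNum_enhancedPowerGraph [Finite G] :
    indepNum (enhancedPowerGraph G) = {H : Subgroup G | IsMaximalCyclic H}.ncard := by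
  obtain ⟨s, hs, hcard⟩ := exists_isIndepSet'_enhancedPowerGraph_ncard_eq (G := G)
  exact IsGreatest.csSup_eq ⟨⟨s, hs, hcard⟩, by
    rintro _ ⟨t, ht, rfl⟩; exact ht.ncard_le_ncard_isMaximalCyclic⟩

end MaximalCyclic

/-- For any finite group `G`, the vertex covering number of the enhanced
power graph of `G` equals `|G| − μ(G)`, where `μ(G)` is the number of maximal cyclic
subgroups of `G`. -/
theorem stmt_4 {G : Type*} [Group G] [Fintype G] :
    vertexCoverNum (enhancedPowerGraph G) =
      Fintype.card G - {H : Subgroup G | IsMaximalCyclic H}.ncard := by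
  rw [vertexCoverNum_eq_card_sub_indepNum, indepNum_enhancedPowerGraph]
end

section
/- Let n ≥ 1 and write n = 3^k · t with k ≥ 0 and 3 ∤ t. In the enhanced power graph of U_{6n} = ⟨a, b : a^{2n} = b^3 = e, ba = ab^{-1}⟩, a vertex x satisfies N[x] = U_{6n} (i.e., x is adjacent to every other vertex) if and only if x ∈ ⟨a^{2·3^k}⟩. -/
/-!
The relation `b a = a b⁻¹` moves `a` past powers of `b` (inverting them) and makes `a²` central,
so every element is `b ^ j (a²) ^ m` or `b ^ j (a²) ^ m a`, and counting gives `orderOf b = 3`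
and `orderOf a = 2n`.

A vertex `x` adjacent to all others commutes with everything, so it lies in the centre `⟨a²⟩`. It
also shares a cyclic subgroup with `b`; if `3` divided its order, that cyclic subgroup would put
`b` inside `⟨x⟩ ≤ ⟨a⟩`. Hence its order divides `t`, i.e. it lies in `⟨a ^ (2·3^k)⟩`, the
subgroup of order `t` of the cyclic group `⟨a⟩`.

Conversely `c = a ^ (2·3^k)` shares a cyclic subgroup with every `y`. If `y = b ^ j (a²) ^ m`,
split `y` into a factor of `3`-power order times a power of `c`; commuting elements of coprime
orders generate a cyclic group. If `y = b ^ j (a²) ^ m a`, then `y²` is an odd power of the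
central element `a²`, and `y` and `c` are both powers of a square root of a suitable power of `a²`.
-/

open Subgroup
open scoped Pointwise

section

variable {G : Type*} [Group G]

theorem commute_of_mem_zpowers {x y z : G} (hx : x ∈ zpowers z) (hy : y ∈ zpowers z) :
    Commute x y := by
  obtain ⟨i, rfl⟩ := mem_zpowers_iff.mp hx
  obtain ⟨j, rfl⟩ := mem_zpowers_iff.mp hy
  exact (Commute.refl z).zpow_zpow i j

theorem enhancedPowerGraph.mem_center_of_forall_adj {x : G}
    (h : ∀ y, y ≠ x → (enhancedPowerGraph G).Adj x y) : x ∈ center G := by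
  refine mem_center_iff.mpr fun y => ?_
  obtain rfl | hy := eq_or_ne y x
  · rfl
  · obtain ⟨-, z, hxz, hyz⟩ := h y hy
    exact (commute_of_mem_zpowers hyz hxz).eq

theorem mem_zpowers_of_orderOf_dvd {x y z : G} (hz : IsOfFinOrder z) (hx : x ∈ zpowers z)
    (hy : y ∈ zpowers z) (h : orderOf y ∣ orderOf x) : y ∈ zpowers x := by
  obtain ⟨i, rfl⟩ := mem_zpowers_iff.mp hx
  obtain ⟨j, rfl⟩ := mem_zpowers_iff.mp hy
  -- `⟨z ^ i⟩ = ⟨z ^ d⟩` for `d = gcd i (orderOf z)`, and `(z ^ j) ^ (orderOf z / d) = 1`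
  -- forces `d ∣ j`.
  set d := Int.gcd i (orderOf z)
  obtain ⟨e, hde⟩ : d ∣ orderOf z := Int.natCast_dvd_natCast.mp (Int.gcd_dvd_right ..)
  have he : e ≠ 0 := by
    rintro rfl
    exact hz.orderOf_pos.ne' hde
  have hzd : z ^ (d : ℤ) ∈ zpowers (z ^ i) := by
    rw [Int.gcd_eq_gcd_ab i (orderOf z), zpow_add, zpow_mul, zpow_mul, zpow_natCast,
      pow_orderOf_eq_one, one_zpow, mul_one]
    exact zpow_mem_zpowers _ _
  have hdj : (d : ℤ) ∣ j := by
    obtain ⟨i', hi'⟩ : (d : ℤ) ∣ i := Int.gcd_dvd_left ..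
    have hxe : (z ^ i) ^ e = 1 := by
      rw [← zpow_natCast, ← zpow_mul, hi',
        show (d : ℤ) * i' * e = orderOf z * i' by rw [hde]; push_cast; ring,
        zpow_mul, zpow_natCast, pow_orderOf_eq_one, one_zpow]
    have hye := orderOf_dvd_iff_pow_eq_one.mp (h.trans (orderOf_dvd_of_pow_eq_one hxe))
    rw [← zpow_natCast, ← zpow_mul, ← orderOf_dvd_iff_zpow_eq_one, hde, Nat.cast_mul] at hye
    exact (mul_dvd_mul_iff_right (by exact_mod_cast he)).mp hye
  obtain ⟨q, rfl⟩ := hdj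
  rw [zpow_mul]
  exact zpow_mem hzd q

theorem mem_zpowers_pow_of_not_dvd [Finite G] {p k t : ℕ} (hp : p.Prime) {g x : G}
    (hg : orderOf g = p ^ k * t) (hx : x ∈ zpowers g) (hpx : ¬ p ∣ orderOf x) :
    x ∈ zpowers (g ^ p ^ k) := by
  have hgt : orderOf (g ^ p ^ k) = t := by
    rw [orderOf_pow_of_dvd (pow_ne_zero k hp.ne_zero) (hg ▸ dvd_mul_right _ _), hg,
      Nat.mul_div_cancel_left _ (pow_pos hp.pos k)]
  have hxt : orderOf x ∣ t :=
    ((hp.coprime_iff_not_dvd.mpr hpx).symm.pow_right k).dvd_of_dvd_mul_left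
      (hg ▸ orderOf_dvd_of_mem_zpowers hx)
  exact mem_zpowers_of_orderOf_dvd (isOfFinOrder_of_finite g) (npow_mem_zpowers g _) hx
    (hgt ▸ hxt)

theorem Commute.mem_zpowers_mul_right {u v : G} (h : Commute u v)
    (hc : (orderOf u).Coprime (orderOf v)) : v ∈ zpowers (u * v) := by
  have hv : v ∈ zpowers (v ^ orderOf u) := mem_zpowers_pow_iff.mpr hc
  rw [← one_mul (v ^ orderOf u), ← pow_orderOf_eq_one u, ← h.mul_pow] at hv
  exact zpowers_le_of_mem (npow_mem_zpowers _ _) hv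

theorem Commute.mem_zpowers_mul_left {u v : G} (h : Commute u v)
    (hc : (orderOf u).Coprime (orderOf v)) : u ∈ zpowers (u * v) :=
  h.eq ▸ h.symm.mem_zpowers_mul_right hc.symm

theorem exists_mem_zpowers_mul_zpow {p n k t : ℕ} {v g : G} (hvg : Commute v g)
    (hv : v ^ p = 1) (hg : g ^ n = 1) (hnkt : n = p ^ k * t) (hpt : p.Coprime t) (m : ℤ) :
    ∃ z, g ^ p ^ k ∈ zpowers z ∧ v * g ^ m ∈ zpowers z := by
  -- `α t + β p ^ (k + 1) = 1` splits `v * g ^ m` as `u * (g ^ p ^ k) ^ (p m β)`,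
  -- where `u = v * g ^ (m α t)` has order dividing `p ^ (k + 1)`.
  obtain ⟨α, β, hαβ⟩ : IsCoprime (t : ℤ) ((p ^ (k + 1) : ℕ) : ℤ) :=
    Nat.isCoprime_iff_coprime.mpr (hpt.pow_left (k + 1)).symm
  have hu : (v * g ^ (m * α * t)) ^ p ^ (k + 1) = 1 := by
    rw [(hvg.zpow_right _).mul_pow, pow_succ', pow_mul, hv, one_pow, one_mul, ← zpow_natCast,
      ← zpow_mul, show m * α * t * ((p * p ^ k : ℕ) : ℤ) = n * (m * α * p) by
        rw [hnkt]; push_cast; ring, zpow_mul, zpow_natCast, hg, one_zpow]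
  have hc : (g ^ p ^ k) ^ t = 1 := by rw [← pow_mul, ← hnkt, hg]
  have hcop : (orderOf (v * g ^ (m * α * t))).Coprime (orderOf (g ^ p ^ k)) :=
    ((hpt.pow_left (k + 1)).coprime_dvd_left (orderOf_dvd_of_pow_eq_one hu)).coprime_dvd_right
      (orderOf_dvd_of_pow_eq_one hc)
  have huc : Commute (v * g ^ (m * α * t)) (g ^ p ^ k) :=
    (hvg.pow_right _).mul_left (((Commute.refl g).zpow_left _).pow_right _)
  have hsplit : v * g ^ m = v * g ^ (m * α * t) * (g ^ p ^ k) ^ (p * m * β) := by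
    rw [mul_assoc, ← zpow_natCast g, ← zpow_mul, ← zpow_add]
    congr 2
    push_cast at hαβ ⊢
    linear_combination -m * hαβ
  refine ⟨_, huc.mem_zpowers_mul_right hcop, ?_⟩
  rw [hsplit]
  exact mul_mem (huc.mem_zpowers_mul_left hcop) (zpow_mem (huc.mem_zpowers_mul_right hcop) _)

theorem exists_mem_zpowers_of_sq_eq_zpow_odd {g y : G} (hgy : Commute g y) {i : ℤ}
    (hy : y ^ 2 = g ^ i) (hi : Odd i) (K : ℤ) : ∃ z, g ^ K ∈ zpowers z ∧ y ∈ zpowers z := by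
  -- With `d = gcd i K` and `i = d (2 s + 1)`, the element `z = y (g ^ d) ^ (-s)` squares to
  -- `g ^ d`, a power of which is `g ^ K`.
  set d : ℤ := (Int.gcd i K : ℤ)
  obtain ⟨r, hr⟩ : d ∣ i := Int.gcd_dvd_left ..
  obtain ⟨q, hq⟩ : d ∣ K := Int.gcd_dvd_right ..
  obtain ⟨s, rfl⟩ : Odd r := Int.Odd.of_mul_right (hr ▸ hi)
  have hz2 : (y * (g ^ d) ^ (-s)) ^ 2 = g ^ d := by
    rw [((hgy.zpow_left _).zpow_left _).symm.mul_pow, hy, hr, ← zpow_natCast, ← zpow_mul,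
      ← zpow_mul, ← zpow_add]
    congr 1
    push_cast
    ring
  generalize hz : y * (g ^ d) ^ (-s) = z at hz2
  refine ⟨z, ?_, ?_⟩
  · rw [hq, zpow_mul, ← hz2]
    exact zpow_mem (npow_mem_zpowers z 2) q
  · have hyz : y = z * (z ^ 2) ^ s := by
      rw [hz2, ← hz, mul_assoc, ← zpow_add, neg_add_cancel, zpow_zero, mul_one]
    rw [hyz]
    exact mul_mem (mem_zpowers z) (zpow_mem (npow_mem_zpowers z 2) s)

namespace U6n

variable {a b : G}

theorem semiconjBy_zpow (hba : b * a = a * b⁻¹) (j : ℤ) : SemiconjBy a (b ^ j) (b ^ (-j)) := by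
  simpa [inv_zpow'] using SemiconjBy.zpow_right (show SemiconjBy a b⁻¹ b from hba.symm) (-j)

theorem commute_sq_right (hba : b * a = a * b⁻¹) : Commute (a ^ 2) b := by
  have := (semiconjBy_zpow hba (-1)).mul_left (semiconjBy_zpow hba 1)
  simp only [zpow_neg, zpow_one, inv_inv] at this
  rwa [sq]

theorem commute_sq (hba : b * a = a * b⁻¹) (hgen : closure {a, b} = ⊤) (g : G) :
    Commute (a ^ 2) g := by
  have : closure {a, b} ≤ centralizer {a ^ 2} := by
    rw [closure_le]
    rintro x (rfl | rfl) <;> rw [SetLike.mem_coe, mem_centralizer_singleton_iff]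
    · exact (Commute.self_pow x 2).eq
    · exact (commute_sq_right hba).eq.symm
  exact (mem_centralizer_singleton_iff.mp (this (hgen ▸ mem_top g))).symm

theorem exists_eq_zpow_mul_zpow (hba : b * a = a * b⁻¹) (hgen : closure {a, b} = ⊤) (g : G) :
    ∃ j i : ℤ, g = b ^ j * a ^ i := by
  have hg : g ∈ closure {a, b} := hgen ▸ mem_top g
  induction hg using closure_induction_left with
  | one => exact ⟨0, 0, by simp⟩
  | mul_left x hx y _ ih =>
    obtain ⟨j, i, rfl⟩ := ih
    obtain hx | hx : x = a ∨ x = b := hx <;> rw [hx]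
    · exact ⟨-j, 1 + i, by rw [← mul_assoc, (semiconjBy_zpow hba j).eq, mul_assoc, zpow_one_add]⟩
    · exact ⟨1 + j, i, by rw [← mul_assoc, zpow_one_add]⟩
  | inv_mul_cancel x hx y _ ih =>
    obtain ⟨j, i, rfl⟩ := ih
    obtain hx | hx : x = a ∨ x = b := hx <;> rw [hx]
    · have hinv : a⁻¹ * b ^ j = b ^ (-j) * a⁻¹ := by
        simpa using (semiconjBy_zpow hba (-j)).inv_symm_left.eq
      exact ⟨-j, -1 + i, by rw [← mul_assoc, hinv, mul_assoc, zpow_add, zpow_neg_one]⟩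
    · exact ⟨-1 + j, i, by rw [← mul_assoc, zpow_add, zpow_neg_one]⟩

theorem exists_normal_form (hba : b * a = a * b⁻¹) (hgen : closure {a, b} = ⊤) (g : G) :
    ∃ j m : ℤ, g = b ^ j * (a ^ 2) ^ m ∨ g = b ^ j * (a ^ 2) ^ m * a := by
  obtain ⟨j, i, rfl⟩ := exists_eq_zpow_mul_zpow hba hgen g
  have hsq (m : ℤ) : (a ^ 2) ^ m = a ^ (2 * m) := by rw [← zpow_natCast, ← zpow_mul]; rfl
  obtain ⟨m, rfl | rfl⟩ := Int.even_or_odd' i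
  · exact ⟨j, m, Or.inl (by rw [hsq])⟩
  · exact ⟨j, m, Or.inr (by rw [hsq, zpow_add_one, mul_assoc])⟩

theorem card_le_orderOf_mul_orderOf (hba : b * a = a * b⁻¹) (hgen : closure {a, b} = ⊤) :
    Nat.card G ≤ orderOf b * orderOf a := by
  have huniv : (zpowers b : Set G) * (zpowers a : Set G) = Set.univ :=
    Set.eq_univ_of_forall fun g => by
      obtain ⟨j, i, rfl⟩ := exists_eq_zpow_mul_zpow hba hgen g
      exact Set.mul_mem_mul (zpow_mem_zpowers b j) (zpow_mem_zpowers a i)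
  rw [← Nat.card_zpowers, ← Nat.card_zpowers, ← Nat.card_univ, ← huniv]
  exact Set.natCard_mul_le

theorem orderOf_b_eq_and_orderOf_a_eq [Finite G] {n : ℕ} (hba : b * a = a * b⁻¹)
    (hgen : closure {a, b} = ⊤) (ha : a ^ (2 * n) = 1) (hb : b ^ 3 = 1)
    (hcard : Nat.card G = 6 * n) : orderOf b = 3 ∧ orderOf a = 2 * n := by
  have hle := hcard ▸ card_le_orderOf_mul_orderOf hba hgen
  have hn : 0 < n := by
    have := Nat.card_pos (α := G)
    omega
  have ha_le : orderOf a ≤ 2 * n := Nat.le_of_dvd (by omega) (orderOf_dvd_of_pow_eq_one ha)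
  rcases (Nat.dvd_prime Nat.prime_three).mp (orderOf_dvd_of_pow_eq_one hb) with hb1 | hb3
  · rw [hb1] at hle
    omega
  · rw [hb3] at hle
    exact ⟨hb3, by omega⟩

theorem not_commute (hba : b * a = a * b⁻¹) (hb : orderOf b = 3) : ¬ Commute a b := by
  intro h
  have hb2 : b ^ 2 = 1 := by
    rw [sq, ← eq_inv_iff_mul_eq_one]
    exact mul_left_cancel (h.eq.trans hba)
  have := hb ▸ orderOf_dvd_of_pow_eq_one hb2
  omega

theorem center_le_zpowers_sq (hba : b * a = a * b⁻¹) (hgen : closure {a, b} = ⊤)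
    (hb : b ^ 3 = 1) (hab : ¬ Commute a b) : center G ≤ zpowers (a ^ 2) := by
  intro g hg
  have hcomm (h : G) : Commute h g := mem_center_iff.mp hg h
  have hw (h : G) (m : ℤ) : Commute ((a ^ 2) ^ m) h := (commute_sq hba hgen h).zpow_left m
  obtain ⟨j, m, rfl | rfl⟩ := exists_normal_form hba hgen g
  · have hbja : Commute (b ^ j) a := by simpa using (hcomm a).symm.mul_left (hw a m).inv_left
    have hjj : b ^ j = b ^ (-j) := mul_right_cancel (hbja.eq.trans (semiconjBy_zpow hba j).eq)
    have hbj : b ^ j = 1 := by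
      calc b ^ j = (b ^ 3) ^ j * (b ^ j * b ^ j)⁻¹ := by
            rw [← zpow_natCast, ← zpow_mul, ← zpow_add, ← zpow_neg, ← zpow_add]
            ring_nf
        _ = 1 := by
            nth_rw 2 [hjj]
            rw [← zpow_add, add_neg_cancel, zpow_zero, inv_one, mul_one, hb, one_zpow]
    rw [hbj, one_mul]
    exact zpow_mem_zpowers _ _
  · have := (((Commute.refl b).zpow_left j).mul_left (hw b m)).inv_left.mul_left (hcomm b).symm
    rw [inv_mul_cancel_left] at this
    exact absurd this hab

theorem sq_normal_form_odd (hba : b * a = a * b⁻¹) (hgen : closure {a, b} = ⊤) (j m : ℤ) :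
    (b ^ j * (a ^ 2) ^ m * a) ^ 2 = (a ^ 2) ^ (2 * m + 1) := by
  have hw (g : G) : Commute ((a ^ 2) ^ m) g := (commute_sq hba hgen g).zpow_left m
  have hu : (b ^ j * a) ^ 2 = a ^ 2 := by
    rw [sq, mul_assoc, ← mul_assoc a, (semiconjBy_zpow hba j).eq, ← mul_assoc, ← mul_assoc,
      ← zpow_add, add_neg_cancel, zpow_zero, one_mul, sq]
  rw [(hw _).symm.eq, mul_assoc, (hw _).mul_pow, hu, ← zpow_natCast, ← zpow_mul,
    ← zpow_add_one]
  ring_nf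

theorem exists_mem_zpowers {n k t : ℕ} (hba : b * a = a * b⁻¹) (hgen : closure {a, b} = ⊤)
    (ha : a ^ (2 * n) = 1) (hb : b ^ 3 = 1) (hnkt : n = 3 ^ k * t) (h3t : ¬ 3 ∣ t) (y : G) :
    ∃ z, a ^ (2 * 3 ^ k) ∈ zpowers z ∧ y ∈ zpowers z := by
  rw [pow_mul]
  obtain ⟨j, m, rfl | rfl⟩ := exists_normal_form hba hgen y
  · exact exists_mem_zpowers_mul_zpow (commute_sq hba hgen _).symm
      (by rw [← zpow_natCast, zpow_comm, zpow_natCast, hb, one_zpow]) (by rwa [← pow_mul])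
      hnkt ((Nat.Prime.coprime_iff_not_dvd Nat.prime_three).mpr h3t) m
  · simpa only [zpow_natCast] using exists_mem_zpowers_of_sq_eq_zpow_odd (commute_sq hba hgen _)
      (sq_normal_form_odd hba hgen j m) (odd_two_mul_add_one m) (3 ^ k : ℕ)

theorem mem_zpowers_of_forall_adj [Finite G] {n k t : ℕ} (hba : b * a = a * b⁻¹)
    (hgen : closure {a, b} = ⊤) (hb : orderOf b = 3) (ha : orderOf a = 2 * n)
    (hnkt : n = 3 ^ k * t) {x : G} (hx : ∀ y, y ≠ x → (enhancedPowerGraph G).Adj x y) :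
    x ∈ zpowers (a ^ (2 * 3 ^ k)) := by
  have hab := not_commute hba hb
  have hxa2 : x ∈ zpowers (a ^ 2) := center_le_zpowers_sq hba hgen (hb ▸ pow_orderOf_eq_one b)
    hab (enhancedPowerGraph.mem_center_of_forall_adj hx)
  have hxa : x ∈ zpowers a := zpowers_le_of_mem (npow_mem_zpowers a 2) hxa2
  have hbx : b ≠ x := by
    rintro rfl
    exact hab (commute_of_mem_zpowers (mem_zpowers a) hxa)
  obtain ⟨-, z, hxz, hbz⟩ := hx b hbx
  have h3x : ¬ 3 ∣ orderOf x := fun h3 => hab <| commute_of_mem_zpowers (mem_zpowers a) <|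
    zpowers_le_of_mem hxa <|
      mem_zpowers_of_orderOf_dvd (isOfFinOrder_of_finite z) hxz hbz (hb ▸ h3)
  have ha2 : orderOf (a ^ 2) = 3 ^ k * t := by
    rw [orderOf_pow_of_dvd two_ne_zero (ha ▸ dvd_mul_right 2 n), ha, ← hnkt]
    omega
  rw [pow_mul]
  exact mem_zpowers_pow_of_not_dvd Nat.prime_three ha2 hxa2 h3x

end U6n

end

theorem stmt_13_general {G : Type*} [Group G] [Fintype G] (n k t : ℕ)
    (hnkt : n = 3 ^ k * t) (h3t : ¬ 3 ∣ t)
    (a b : G) (ha : a ^ (2 * n) = 1) (hb : b ^ 3 = 1) (hba : b * a = a * b⁻¹)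
    (hcard : Fintype.card G = 6 * n) (hgen : Subgroup.closure {a, b} = ⊤) :
    ∀ x : G, (∀ y : G, y ≠ x → (enhancedPowerGraph G).Adj x y) ↔
      x ∈ Subgroup.zpowers (a ^ (2 * 3 ^ k)) := by
  obtain ⟨hb3, ha2n⟩ := U6n.orderOf_b_eq_and_orderOf_a_eq hba hgen ha hb
    (Nat.card_eq_fintype_card.trans hcard)
  refine fun x => ⟨U6n.mem_zpowers_of_forall_adj hba hgen hb3 ha2n hnkt, fun hx y hyx => ?_⟩
  obtain ⟨z, hcz, hyz⟩ := U6n.exists_mem_zpowers hba hgen ha hb hnkt h3t y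
  exact ⟨hyx.symm, z, zpowers_le_of_mem hcz hx, hyz⟩

/-- In the enhanced power graph of `U_{6n}` (`n = 3^k·t`, `3 ∤ t`),
a vertex `x` satisfies `N[x] = U_{6n}` (it is adjacent to every other vertex) if and only if
`x ∈ ⟨a^{2·3^k}⟩`. -/
theorem stmt_13 {G : Type*} [Group G] [Fintype G] (n k t : ℕ) (hn : 1 ≤ n)
    (hnkt : n = 3 ^ k * t) (h3t : ¬ 3 ∣ t)
    (a b : G) (ha : a ^ (2 * n) = 1) (hb : b ^ 3 = 1) (hba : b * a = a * b⁻¹)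
    (hcard : Fintype.card G = 6 * n) (hgen : Subgroup.closure {a, b} = ⊤) :
    ∀ x : G, (∀ y : G, y ≠ x → (enhancedPowerGraph G).Adj x y) ↔
      x ∈ Subgroup.zpowers (a ^ (2 * 3 ^ k)) :=
  stmt_13_general n k t hnkt h3t a b ha hb hba hcard hgen
end
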